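/- arXiv:1805.03577 — 2 statements merged into one kernel-verified Lean document; each statement's English description precedes it below -/
import Mathlib

section
/- A monomial order (a well-order compatible with the semigroup operation and with 0 as least element) exists on the semigroup algebra K[S] if and only if the affine semigroup S is pointed, i.e., s + t ≠ 0 for all nonzero s, t ∈ S. -/
/-!
A monomial order makes every nonzero element positive, so `s + t = 0` with `s, t ≠ 0` would
give `0 < t < s + t = 0`. Conversely, a pointed `S` is a cone in the torsion-free group
`ℤ^n`; by Zorn it extends to a maximal cone `C`, and maximality plus torsion-freeness force
`g ∈ C` or `-g ∈ C` for every `g`, so `C` is the positive cone of a linear group order. Its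
restriction to `S` is translation invariant with `0` as least element, and it is a well-order
by Dickson's lemma: `S` is the monotone image of `ℕ^k` under `a ↦ ∑ aᵢ gᵢ` for generators `gᵢ`.
-/

theorem eq_zero_or_eq_zero_of_add_eq_zero_of_zero_rel {M : Type*} [AddZeroClass M]
    {r : M → M → Prop} [IsStrictOrder M r] (hr₀ : ∀ s, s ≠ 0 → r 0 s)
    (hr : ∀ s t u, r s t → r (s + u) (t + u)) {s t : M} (hst : s + t = 0) : s = 0 ∨ t = 0 := by
  by_contra! h
  have hts : r t 0 := by simpa [hst] using hr 0 s t (hr₀ s h.1)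
  exact irrefl_of r 0 (trans_of r (hr₀ t h.2) hts)

namespace AddGroupCone

variable {G : Type*} [AddCommGroup G]

theorem bddAbove_of_isChain {c : Set (AddGroupCone G)} (hc : IsChain (· ≤ ·) c)
    (hne : c.Nonempty) : BddAbove c := by
  have hdir : DirectedOn (· ≤ ·) (toAddSubmonoid '' c) :=
    directedOn_image.mpr hc.directedOn
  have hmem {a : G} := AddSubmonoid.mem_sSup_of_directedOn (x := a) (hne.image _) hdir
  let ub : AddGroupCone G :=
    { toAddSubmonoid := sSup (toAddSubmonoid '' c)
      eq_zero_of_mem_of_neg_mem' := fun {a} ha hna => by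
        obtain ⟨_, ⟨C₁, hC₁, rfl⟩, ha⟩ := hmem.mp ha
        obtain ⟨_, ⟨C₂, hC₂, rfl⟩, hna⟩ := hmem.mp hna
        rcases hc.total hC₁ hC₂ with h | h
        · exact eq_zero_of_mem_of_neg_mem (C := C₂) (h ha) hna
        · exact eq_zero_of_mem_of_neg_mem (C := C₁) ha (h hna) }
  exact ⟨ub, fun C hC a ha => AddSubmonoid.mem_sSup_of_mem (Set.mem_image_of_mem _ hC) ha⟩

theorem exists_ge_isMax (C₀ : AddGroupCone G) : ∃ C, C₀ ≤ C ∧ IsMax C :=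
  zorn_le_nonempty_Ici₀ C₀ (fun _ _ hc y hy => bddAbove_of_isChain hc ⟨y, hy⟩) C₀ le_rfl

/-- The submonoid generated by `C` and `g ∉ C` is not a cone: some nonzero `a = c₁ + m₁ • g`
has `-a = c₂ + m₂ • g`, and then `m₁ + m₂ ≠ 0`. -/
theorem exists_neg_nsmul_mem_of_isMax {C : AddGroupCone G} (hC : IsMax C) {g : G} (hg : g ∉ C) :
    ∃ m ≠ 0, -(m • g) ∈ C := by
  by_contra! hCg
  let D : AddGroupCone G :=
    { toAddSubmonoid := C.toAddSubmonoid ⊔ AddSubmonoid.closure {g}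
      eq_zero_of_mem_of_neg_mem' := fun {a} ha hna => by
        obtain ⟨c₁, hc₁, _, hm₁, rfl⟩ := AddSubmonoid.mem_sup.mp ha
        obtain ⟨m₁, rfl⟩ := AddSubmonoid.mem_closure_singleton.mp hm₁
        obtain ⟨c₂, hc₂, _, hm₂, hsum⟩ := AddSubmonoid.mem_sup.mp hna
        obtain ⟨m₂, rfl⟩ := AddSubmonoid.mem_closure_singleton.mp hm₂
        have hm : m₁ + m₂ = 0 := by
          by_contra hm
          refine hCg _ hm ?_
          have : -((m₁ + m₂) • g) = c₁ + c₂ := by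
            rw [add_nsmul]; linear_combination (norm := module) -hsum
          exact this ▸ add_mem hc₁ hc₂
        obtain ⟨rfl, rfl⟩ := Nat.add_eq_zero_iff.mp hm
        simp only [zero_smul, add_zero] at hsum ⊢
        exact eq_zero_of_mem_of_neg_mem (C := C) hc₁ (hsum ▸ hc₂) }
  have hCD : C ≤ D := fun x hx => AddSubmonoid.mem_sup_left hx
  exact hg (hC hCD (AddSubmonoid.mem_sup_right (AddSubmonoid.subset_closure rfl)))

theorem hasMemOrNegMem_of_isMax [IsAddTorsionFree G] {C : AddGroupCone G} (hC : IsMax C) :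
    HasMemOrNegMem C := by
  refine ⟨fun g => or_iff_not_imp_left.mpr fun hg => by_contra fun hng => ?_⟩
  obtain ⟨m, hm, hmg⟩ := exists_neg_nsmul_mem_of_isMax hC hg
  obtain ⟨k, hk, hkg⟩ := exists_neg_nsmul_mem_of_isMax hC hng
  rw [smul_neg, neg_neg] at hkg
  have : (k * m) • g = 0 := by
    refine eq_zero_of_mem_of_neg_mem (C := C) ?_ ?_
    · rw [mul_nsmul]; exact nsmul_mem hkg m
    · rw [mul_nsmul', ← smul_neg]; exact nsmul_mem hmg k
  exact hg ((nsmul_eq_zero_iff_right (mul_ne_zero hk hm)).mp this ▸ zero_mem C)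

theorem exists_ge_hasMemOrNegMem [IsAddTorsionFree G] (C₀ : AddGroupCone G) :
    ∃ C : AddGroupCone G, C₀ ≤ C ∧ HasMemOrNegMem C :=
  let ⟨C, hC₀C, hC⟩ := exists_ge_isMax C₀
  ⟨C, hC₀C, hasMemOrNegMem_of_isMax hC⟩

end AddGroupCone

theorem wellQuasiOrderedLE_of_le_self_add {M : Type*} [AddCommMonoid M] [Preorder M]
    [AddMonoid.FG M] (h : ∀ a b : M, a ≤ a + b) : WellQuasiOrderedLE M := by
  obtain ⟨s, hs⟩ := AddMonoid.FG.fg_top (M := M)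
  let φ := Fintype.linearCombination ℕ (Subtype.val : s → M)
  have hmono : Monotone φ := fun a b hab => by
    rw [← add_tsub_cancel_of_le hab, map_add]
    exact h _ _
  refine hmono.wellQuasiOrderedLE_of_wellQuasiOrderedLE_of_surjective fun x => ?_
  obtain ⟨a, rfl⟩ := AddSubmonoid.mem_closure_finset'.mp (hs ▸ AddSubmonoid.mem_top x)
  exact ⟨a, Fintype.linearCombination_apply ..⟩

theorem AddSubmonoid.exists_monomialOrder_of_pointed {G : Type*} [AddCommGroup G]
    [IsAddTorsionFree G] (S : AddSubmonoid G) (hfg : S.FG) (hS : ∀ a ∈ S, -a ∈ S → a = 0) :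
    ∃ r : S → S → Prop, IsWellOrder S r ∧ (∀ s : S, s ≠ 0 → r 0 s) ∧
      ∀ s t u : S, r s t → r (s + u) (t + u) := by
  obtain ⟨C, hSC, hC⟩ := AddGroupCone.exists_ge_hasMemOrNegMem ⟨S, hS _⟩
  classical
  let _ := LinearOrder.mkOfAddGroupCone C
  have _ := IsOrderedAddMonoid.mkOfCone C
  have hpos : ∀ s : S, 0 ≤ s := fun s => show (s : G) - 0 ∈ C by simpa using hSC s.2
  have : AddMonoid.FG S := (AddMonoid.fg_iff_addSubmonoid_fg S).mpr hfg
  have : WellQuasiOrderedLE S :=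
    wellQuasiOrderedLE_of_le_self_add fun a b : S => le_add_of_nonneg_right (hpos b)
  exact ⟨(· < ·), inferInstance, fun s hs => (hpos s).lt_of_ne' hs,
    fun s t u h => add_lt_add_left h u⟩

/-- A monomial order (a well-order compatible with addition and with `0` as
least element) exists on a finitely generated affine semigroup
`S ⊆ ℤ^n` if and only if `S` is pointed, i.e. `s + t ≠ 0` for all nonzero
`s, t ∈ S`. -/
theorem exists_monomial_order_iff_pointed {n : ℕ}
    (S : AddSubmonoid (Fin n → ℤ)) (hfg : S.FG) :
    (∃ r : S → S → Prop, IsWellOrder S r ∧ (∀ s : S, s ≠ 0 → r 0 s) ∧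
        (∀ s t u : S, r s t → r (s + u) (t + u))) ↔
      (∀ s t : S, s ≠ 0 → t ≠ 0 → s + t ≠ 0) := by
  refine ⟨fun ⟨r, _, hr₀, hr⟩ s t hs ht hst => ?_,
    fun hS => S.exists_monomialOrder_of_pointed hfg ?_⟩
  · exact (eq_zero_or_eq_zero_of_add_eq_zero_of_zero_rel hr₀ hr hst).elim hs ht
  · intro a ha hna
    by_contra h
    exact hS ⟨a, ha⟩ ⟨-a, hna⟩ (by simpa using h) (by simpa using h)
      (Subtype.ext (add_neg_cancel a))
end

section
/- For the semigroup S generated by {(0,0),(1,0),(0,1),(1,1)} ⊂ ℕ^2, no monomial order on K[S] refines the affine degree: i.e., there is no well-order < on S compatible with addition such that δ^A(s) < δ^A(r) implies s < r, where δ^A(s) is the minimal number of generators needed to write s as a sum of generators. -/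
/-- The generating set `G = {(0,0),(1,0),(0,1),(1,1)} ⊆ ℕ²`. -/
def Gset : Set (ℕ × ℕ) := {(0,0), (1,0), (0,1), (1,1)}

/-- The affine degree: the minimal number `d` of generators of `G`
summing to `s`. -/
noncomputable def deltaA (s : ℕ × ℕ) : ℕ :=
  sInf {d | ∃ f : Fin d → ℕ × ℕ, (∀ i, f i ∈ Gset) ∧ ∑ i, f i = s}

/-! With `a = (1,0)` and `b = (0,1)`, say `a < b`; translating by `a` gives `2a < a + b`. But
`a + b = (1,1)` is a generator, of affine degree `1`, while `2a = (2,0)` needs two generators, so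
refining the affine degree forces `a + b < 2a`. The case `b < a` is symmetric, with `2b = (0,2)`. -/

theorem double_lt_add_or_double_lt_add {M : Type*} [AddCommMonoid M] (r : M → M → Prop)
    [Std.Trichotomous r] (hadd : ∀ s t u, r s t → r (s + u) (t + u)) {a b : M} (hab : a ≠ b) :
    r (a + a) (a + b) ∨ r (b + b) (a + b) := by
  rcases trichotomous_of r a b with h | h | h
  · exact .inl (by simpa only [add_comm b a] using hadd a b a h)
  · exact absurd h hab
  · exact .inr (hadd b a b h)

lemma exists_fin_sum_eq_of_mem_closure {s : ℕ × ℕ} (hs : s ∈ AddSubmonoid.closure Gset) :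
    ∃ d, ∃ f : Fin d → ℕ × ℕ, (∀ i, f i ∈ Gset) ∧ ∑ i, f i = s := by
  obtain ⟨l, hl, rfl⟩ := AddSubmonoid.exists_list_of_mem_closure hs
  exact ⟨l.length, l.get, fun i ↦ hl _ (List.get_mem l i), by rw [← List.sum_ofFn, List.ofFn_get]⟩

lemma exists_fin_sum_eq_deltaA {s : ℕ × ℕ} (hs : s ∈ AddSubmonoid.closure Gset) :
    ∃ f : Fin (deltaA s) → ℕ × ℕ, (∀ i, f i ∈ Gset) ∧ ∑ i, f i = s :=
  Nat.sInf_mem (exists_fin_sum_eq_of_mem_closure hs)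

lemma deltaA_le_one_of_mem {s : ℕ × ℕ} (hs : s ∈ Gset) : deltaA s ≤ 1 :=
  Nat.sInf_le ⟨![s], Fin.forall_fin_one.2 hs, by simp⟩

lemma one_lt_deltaA {s : ℕ × ℕ} (hs : s ∈ AddSubmonoid.closure Gset) (hs0 : s ≠ 0)
    (hsG : s ∉ Gset) : 1 < deltaA s := by
  obtain ⟨f, hf, hsum⟩ := exists_fin_sum_eq_deltaA hs
  by_contra! hle
  interval_cases h : deltaA s
  · exact hs0 (by simpa using hsum.symm)
  · exact hsG (by simpa [← hsum] using hf 0)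

/-- For the semigroup generated by `{(0,0),(1,0),(0,1),(1,1)}`, there is no
monomial order (translation-invariant well-order with `0` minimal) refining
the affine degree. -/
theorem no_monomial_order_refining_affine_degree :
    ¬ ∃ r : (AddSubmonoid.closure Gset) → (AddSubmonoid.closure Gset) → Prop,
      IsWellOrder (AddSubmonoid.closure Gset) r ∧
      (∀ s : AddSubmonoid.closure Gset, s ≠ 0 → r 0 s) ∧
      (∀ s t u : AddSubmonoid.closure Gset, r s t → r (s + u) (t + u)) ∧
      (∀ s t : AddSubmonoid.closure Gset,
        deltaA (s : ℕ × ℕ) < deltaA (t : ℕ × ℕ) → r s t) := by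
  rintro ⟨r, hWO, -, hadd, hdeg⟩
  let a : AddSubmonoid.closure Gset := ⟨(1, 0), AddSubmonoid.subset_closure (by simp [Gset])⟩
  let b : AddSubmonoid.closure Gset := ⟨(0, 1), AddSubmonoid.subset_closure (by simp [Gset])⟩
  have hab_lt (c : AddSubmonoid.closure Gset) (hc0 : (c + c : ℕ × ℕ) ≠ 0)
      (hcG : (c + c : ℕ × ℕ) ∉ Gset) : r (a + b) (c + c) :=
    hdeg _ _ <| (deltaA_le_one_of_mem (s := (1, 1)) (by simp [Gset])).trans_lt
      (one_lt_deltaA (c + c).2 hc0 hcG)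
  rcases double_lt_add_or_double_lt_add r hadd (a := a) (b := b) (by simp [a, b]) with h | h
  · exact asymm h (hab_lt a (by simp [a]) (by simp [a, Gset]))
  · exact asymm h (hab_lt b (by simp [b]) (by simp [b, Gset]))
end
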